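/- With A and Ā as in the positive closure construction, the language of Ā equals the positive closure of the language of A: L(Ā) = { ρ*(w) : w ∈ L(A), ρ ∈ Fin(𝔸) }. -/
import Mathlib


abbrev Atom := ℕ

/-- A finite renaming. -/
def IsRenaming (ρ : Atom → Atom) : Prop := ({a | ρ a ≠ a} : Set Atom).Finite

/-- A finite permutation. -/
def FinPermSupp (π : Equiv.Perm Atom) : Prop := ({a | π a ≠ a} : Set Atom).Finite

/-- `𝔸^{#m}`: tuples of `m` pairwise distinct atoms. -/
def DTuple (m : ℕ) : Type := {p : Fin m → Atom // Function.Injective p}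

/-- Letterwise action of a permutation on a distinct tuple. -/
def permDT (π : Equiv.Perm Atom) {m : ℕ} (p : DTuple m) : DTuple m :=
  ⟨⇑π ∘ p.1, π.injective.comp p.2⟩

/-- Acceptance of a word from a state. -/
def Accepts {Q : Type*} (δ : Q → Atom → Q → Prop) (F : Set Q) : Q → List Atom → Prop
  | q, [] => q ∈ F
  | q, a :: w => ∃ q', δ q a q' ∧ Accepts δ F q' w

/-- The language of the NOFA `A` with states `J × 𝔸^{#m}`, initial states
`J_I × 𝔸^{#m}` and final states `J_F × 𝔸^{#m}`. -/
def langA {J : Type} {m : ℕ}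
    (δ : (J × DTuple m) → Atom → (J × DTuple m) → Prop)
    (J_I J_F : Set J) : Set (List Atom) :=
  {w | ∃ s : J × DTuple m, s.1 ∈ J_I ∧ Accepts δ {s' | s'.1 ∈ J_F} s w}

/-- The transition relation of the positive-closure automaton `Ā` on states `J × 𝔸^m`. -/
def deltaBar {J : Type} {m : ℕ}
    (δ : (J × DTuple m) → Atom → (J × DTuple m) → Prop) :
    (J × (Fin m → Atom)) → Atom → (J × (Fin m → Atom)) → Prop :=
  fun s b s' => ∃ (p p' : DTuple m) (a : Atom) (ρ : Atom → Atom),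
    IsRenaming ρ ∧ δ (s.1, p) a (s'.1, p') ∧
      (s.2 = fun k => ρ (p.1 k)) ∧ (s'.2 = fun k => ρ (p'.1 k)) ∧ b = ρ a

/-- The language of `Ā`. -/
def langABar {J : Type} {m : ℕ}
    (δ : (J × DTuple m) → Atom → (J × DTuple m) → Prop)
    (J_I J_F : Set J) : Set (List Atom) :=
  {w | ∃ s : J × (Fin m → Atom), s.1 ∈ J_I ∧ Accepts (deltaBar δ) {s' | s'.1 ∈ J_F} s w}

/-- The positive closure of a language. -/
def posClosure (L : Set (List Atom)) : Set (List Atom) :=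
  {v | ∃ w ∈ L, ∃ ρ : Atom → Atom, IsRenaming ρ ∧ v = w.map ρ}


lemma finPermSupp_one' : FinPermSupp (1 : Equiv.Perm Atom) := by
  simp [FinPermSupp]

lemma finPermSupp_swap' (a b : Atom) : FinPermSupp (Equiv.swap a b) := by
  apply Set.Finite.subset (Set.Finite.insert a (Set.finite_singleton b))
  intro x hx
  by_contra h
  simp only [Set.mem_insert_iff, Set.mem_singleton_iff] at h
  push_neg at h
  exact hx (Equiv.swap_apply_of_ne_of_ne h.1 h.2)

lemma finPermSupp_mul' {π ρ : Equiv.Perm Atom} (hπ : FinPermSupp π) (hρ : FinPermSupp ρ) :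
    FinPermSupp (π * ρ) := by
  apply Set.Finite.subset (hπ.union hρ)
  intro x hx
  simp only [Set.mem_setOf_eq, Equiv.Perm.mul_apply] at hx
  rw [Set.mem_union]
  by_contra h
  push_neg at h
  simp only [Set.mem_setOf_eq, not_not] at h
  rw [h.2] at hx
  exact hx h.1

lemma exists_perm_extend (s : Finset Atom) (σ : Atom → Atom) (hσ : Set.InjOn σ s) :
    ∃ π : Equiv.Perm Atom, FinPermSupp π ∧ ∀ x ∈ s, π x = σ x := by
  induction s using Finset.induction_on with
  | empty => exact ⟨1, finPermSupp_one', by simp⟩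
  | @insert a s ha ih =>
      obtain ⟨π, hπ, hπs⟩ := ih (hσ.mono (by simp [Finset.subset_insert]))
      refine ⟨π * Equiv.swap a (π.symm (σ a)), finPermSupp_mul' hπ (finPermSupp_swap' _ _), ?_⟩
      intro x hx
      rcases Finset.mem_insert.mp hx with rfl | hxs
      · simp [Equiv.Perm.mul_apply]
      · have hxa : x ≠ a := fun h => ha (h ▸ hxs)
        have hx2 : x ≠ π.symm (σ a) := by
          intro h
          have : π x = σ a := by rw [h]; simp
          rw [hπs x hxs] at this
          exact hxa (hσ (Finset.mem_insert_of_mem hxs) (Finset.mem_insert_self a s) this)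
        rw [Equiv.Perm.mul_apply, Equiv.swap_apply_of_ne_of_ne hxa hx2]
        exact hπs x hxs

lemma exists_perm_match {m : ℕ} (f g : Fin m → Atom) (hf : Function.Injective f)
    (hg : Function.Injective g) (D T : Finset Atom) :
    ∃ π : Equiv.Perm Atom, FinPermSupp π ∧ (∀ k, π (f k) = g k) ∧
      ∀ x ∈ D, (∀ k, f k ≠ x) → π x ∉ T := by
  classical
  set F : Finset Atom := Finset.image f Finset.univ with hF
  set N : Atom := (T ∪ Finset.image g Finset.univ).sup id + 1 with hN
  have hND : ∀ t, t ∈ T ∪ Finset.image g Finset.univ → t < N := by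
    intro t ht
    have h1 : id t ≤ (T ∪ Finset.image g Finset.univ).sup id := Finset.le_sup ht
    simp only [id_eq] at h1
    exact Nat.lt_succ_of_le h1
  set σ : Atom → Atom := fun x =>
    if hx : x ∈ F then g ((Finset.mem_image.mp hx).choose) else x + N with hσdef
  have hσf : ∀ k, σ (f k) = g k := by
    intro k
    have hmem : f k ∈ F := Finset.mem_image.mpr ⟨k, Finset.mem_univ k, rfl⟩
    have hspec := (Finset.mem_image.mp hmem).choose_spec
    simp only [hσdef, dif_pos hmem]
    exact congrArg g (hf hspec.2)
  have hσout : ∀ x, x ∉ F → σ x = x + N := by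
    intro x hx
    simp only [hσdef, dif_neg hx]
  have hgN : ∀ k, g k < N := fun k =>
    hND _ (Finset.mem_union_right _ (Finset.mem_image.mpr ⟨k, Finset.mem_univ k, rfl⟩))
  have hTN : ∀ t ∈ T, t < N := fun t ht => hND _ (Finset.mem_union_left _ ht)
  have hinj : Set.InjOn σ (F ∪ D : Finset Atom) := by
    intro x hx y hy hxy
    by_cases hxF : x ∈ F <;> by_cases hyF : y ∈ F
    · obtain ⟨k, -, rfl⟩ := Finset.mem_image.mp hxF
      obtain ⟨l, -, rfl⟩ := Finset.mem_image.mp hyF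
      rw [hσf, hσf] at hxy
      exact congrArg f (hg hxy)
    · obtain ⟨k, -, rfl⟩ := Finset.mem_image.mp hxF
      rw [hσf, hσout y hyF] at hxy
      exact absurd hxy (Nat.ne_of_lt (lt_of_lt_of_le (hgN k) (Nat.le_add_left N y)))
    · obtain ⟨l, -, rfl⟩ := Finset.mem_image.mp hyF
      rw [hσout x hxF, hσf] at hxy
      exact absurd hxy.symm (Nat.ne_of_lt (lt_of_lt_of_le (hgN l) (Nat.le_add_left N x)))
    · rw [hσout x hxF, hσout y hyF] at hxy
      exact Nat.add_right_cancel hxy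
  obtain ⟨π, hπ, hπs⟩ := exists_perm_extend (F ∪ D) σ hinj
  refine ⟨π, hπ, ?_, ?_⟩
  · intro k
    rw [hπs (f k) (Finset.mem_union_left _ (Finset.mem_image.mpr ⟨k, Finset.mem_univ k, rfl⟩))]
    exact hσf k
  · intro x hx hxf
    have hxF : x ∉ F := by
      intro h
      obtain ⟨k, -, rfl⟩ := Finset.mem_image.mp h
      exact hxf k rfl
    rw [hπs x (Finset.mem_union_right _ hx), hσout x hxF]
    intro hT
    exact absurd (hTN _ hT) (Nat.not_lt.mpr (Nat.le_add_left N x))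

lemma accepts_map_renaming {J : Type} {m : ℕ}
    (δ : (J × DTuple m) → Atom → (J × DTuple m) → Prop)
    (J_F : Set J) (ρ : Atom → Atom) (hρ : IsRenaming ρ) :
    ∀ (w : List Atom) (j : J) (p : DTuple m),
      Accepts δ {s' | s'.1 ∈ J_F} (j, p) w →
      Accepts (deltaBar δ) {s' | s'.1 ∈ J_F} (j, fun k => ρ (p.1 k)) (w.map ρ) := by
  intro w
  induction w with
  | nil => intro j p h; exact h
  | cons a w ih =>
      intro j p h
      obtain ⟨s', hstep, hrest⟩ := h
      exact ⟨(s'.1, fun k => ρ (s'.2.1 k)),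
        ⟨p, s'.2, a, ρ, hρ, hstep, rfl, rfl, rfl⟩,
        ih s'.1 s'.2 hrest⟩

lemma accepts_bar_posClosure {J : Type} {m : ℕ}
    (δ : (J × DTuple m) → Atom → (J × DTuple m) → Prop)
    (J_F : Set J)
    (hδ : ∀ π : Equiv.Perm Atom, FinPermSupp π →
      ∀ (j : J) (p : DTuple m) (a : Atom) (j' : J) (p' : DTuple m),
        δ (j, p) a (j', p') → δ (j, permDT π p) (π a) (j', permDT π p')) :
    ∀ (w : List Atom) (j : J) (q : Fin m → Atom),
      Accepts (deltaBar δ) {s' | s'.1 ∈ J_F} (j, q) w →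
      ∀ S : Finset Atom,
      ∃ (p : DTuple m) (w' : List Atom) (ρ : Atom → Atom),
        IsRenaming ρ ∧ q = (fun k => ρ (p.1 k)) ∧ w = w'.map ρ ∧
        Accepts δ {s' | s'.1 ∈ J_F} (j, p) w' ∧
        (∀ k, p.1 k ∉ S) ∧ ∀ x ∈ w', x ∉ S := by
  classical
  intro w
  induction w with
  | nil =>
      intro j q hacc S
      set N : Atom := S.sup id + 1 with hN
      have hpinj : Function.Injective (fun k : Fin m => (k : ℕ) + N) := by
        intro k l h
        simp only at h
        exact Fin.val_injective (Nat.add_right_cancel h)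
      set Fp : Finset Atom := Finset.image (fun k : Fin m => (k : ℕ) + N) Finset.univ with hFp
      refine ⟨⟨fun k => (k : ℕ) + N, hpinj⟩, [],
        fun x => if hx : x ∈ Fp then q ((Finset.mem_image.mp hx).choose) else x,
        ?_, ?_, rfl, hacc, ?_, by simp⟩
      · apply Set.Finite.subset Fp.finite_toSet
        intro x hx
        simp only [Set.mem_setOf_eq] at hx
        by_cases h : x ∈ Fp
        · exact h
        · rw [dif_neg h] at hx
          exact absurd rfl hx
      · funext k
        have hmem : (k : ℕ) + N ∈ Fp := Finset.mem_image.mpr ⟨k, Finset.mem_univ k, rfl⟩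
        have hspec := (Finset.mem_image.mp hmem).choose_spec
        simp only [dif_pos hmem]
        exact (congrArg q (hpinj hspec.2)).symm
      · intro k hk
        have h1 : id ((k : ℕ) + N) ≤ S.sup id := Finset.le_sup hk
        simp only [id_eq] at h1
        have h2 : N ≤ (k : ℕ) + N := Nat.le_add_left N _
        have h3 : S.sup id < N := Nat.lt_succ_self _
        exact absurd h1 (Nat.not_le.mpr (lt_of_lt_of_le h3 h2))
  | cons b rest ih =>
      intro j q hacc S
      obtain ⟨s1, hstep, hrest⟩ := hacc
      obtain ⟨p, p', a, ρ0, hρ0, hδ0, hq, hq1, hb⟩ := hstep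
      obtain ⟨p1, w1, σ, hσ, hq1', hrest_eq, hacc1, hp1S, hw1S⟩ := ih s1.1 s1.2 hrest S
      set D : Finset Atom := Finset.image p.1 Finset.univ ∪ {a} with hD
      obtain ⟨π, hπ, hπf, hπD⟩ := exists_perm_match p'.1 p1.1 p'.2 p1.2 D (S ∪ w1.toFinset)
      set τ : Atom → Atom := fun x => if π.symm x ∈ D then ρ0 (π.symm x) else σ x with hτ
      have hτπ : ∀ y ∈ D, τ (π y) = ρ0 y := by
        intro y hy
        simp only [hτ, Equiv.symm_apply_apply, if_pos hy]
      have hpermp' : permDT π p' = p1 := Subtype.ext (funext fun k => hπf k)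
      have haD : a ∈ D := Finset.mem_union_right _ (Finset.mem_singleton_self a)
      have hpD : ∀ k, p.1 k ∈ D := fun k =>
        Finset.mem_union_left _ (Finset.mem_image.mpr ⟨k, Finset.mem_univ k, rfl⟩)
      have hDS : ∀ y ∈ D, π y ∉ S := by
        intro y hy
        by_cases hyp' : ∃ i, p'.1 i = y
        · obtain ⟨i, rfl⟩ := hyp'
          rw [hπf i]
          exact hp1S i
        · push_neg at hyp'
          have h2 := hπD y hy hyp'
          intro hS
          exact h2 (Finset.mem_union_left _ hS)
      have hτw1 : ∀ x ∈ w1, τ x = σ x := by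
        intro x hx
        by_cases h : π.symm x ∈ D
        · by_cases hyp' : ∃ i, p'.1 i = π.symm x
          · obtain ⟨i, hi⟩ := hyp'
            have hx1 : x = p1.1 i := by
              rw [← hπf i, hi, Equiv.apply_symm_apply]
            calc τ x = ρ0 (π.symm x) := if_pos h
              _ = ρ0 (p'.1 i) := by rw [hi]
              _ = s1.2 i := (congrFun hq1 i).symm
              _ = σ (p1.1 i) := congrFun hq1' i
              _ = σ x := by rw [← hx1]
          · push_neg at hyp'
            have h2 := hπD _ h hyp'
            rw [Equiv.apply_symm_apply] at h2
            exact absurd (Finset.mem_union_right _ (List.mem_toFinset.mpr hx)) h2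
        · exact if_neg h
      refine ⟨permDT π p, π a :: w1, τ, ?_, ?_, ?_, ?_, ?_, ?_⟩
      · apply Set.Finite.subset (Set.Finite.union (D.image π).finite_toSet hσ)
        intro x hx
        simp only [Set.mem_setOf_eq] at hx
        by_cases h : π.symm x ∈ D
        · left
          exact Finset.mem_coe.mpr (Finset.mem_image.mpr ⟨π.symm x, h, Equiv.apply_symm_apply π x⟩)
        · right
          have h2 : τ x = σ x := if_neg h
          rw [h2] at hx
          exact hx
      · funext k
        show q k = τ (π (p.1 k))
        rw [hτπ _ (hpD k)]
        exact congrFun hq k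
      · rw [List.map_cons, hτπ a haD, List.map_congr_left hτw1, ← hrest_eq, hb]
      · refine ⟨(s1.1, p1), ?_, hacc1⟩
        have h2 := hδ π hπ j p a s1.1 p' hδ0
        rwa [hpermp'] at h2
      · exact fun k => hDS _ (hpD k)
      · intro x hx
        rcases List.mem_cons.mp hx with rfl | hx
        · exact hDS a haD
        · exact hw1S x hx

/-- for a `Perm(𝔸)`-equivariant automaton `A` on states `J × 𝔸^{#m}`,
the language of `Ā` equals the positive closure of the language of `A`. -/
theorem langABar_eq_posClosure {J : Type} [Finite J] {m : ℕ}
    (δ : (J × DTuple m) → Atom → (J × DTuple m) → Prop)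
    (J_I J_F : Set J)
    (hδ : ∀ π : Equiv.Perm Atom, FinPermSupp π →
      ∀ (j : J) (p : DTuple m) (a : Atom) (j' : J) (p' : DTuple m),
        δ (j, p) a (j', p') → δ (j, permDT π p) (π a) (j', permDT π p')) :
    langABar δ J_I J_F = posClosure (langA δ J_I J_F) := by
  ext w
  simp only [langABar, langA, posClosure, Set.mem_setOf_eq]
  constructor
  · rintro ⟨s, hI, hacc⟩
    obtain ⟨p, w', ρ, hρ, hq, hmap, hacc', -, -⟩ :=
      accepts_bar_posClosure δ J_F hδ w s.1 s.2 hacc ∅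
    exact ⟨w', ⟨(s.1, p), hI, hacc'⟩, ρ, hρ, hmap⟩
  · rintro ⟨w', ⟨s, hI, hacc⟩, ρ, hρ, rfl⟩
    exact ⟨(s.1, fun k => ρ (s.2.1 k)), hI,
      accepts_map_renaming δ J_F ρ hρ w' s.1 s.2 hacc⟩
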